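/- arXiv:2307.13112 — 2 statements merged into one kernel-verified Lean document; each statement's English description precedes it below -/
import Mathlib

section
/- Let B = [b_1, ..., b_k] be a 1×k integer matrix with k ≥ 1 such that ker(B) ∩ ℝ^k_{≥0} = {0}. Then the function p_B : ℤ → ℕ defined by p_B(b) = #{x ∈ ℕ^k : b_1 x_1 + ... + b_k x_k = b} restricted to the semigroup generated by the entries of B agrees with a polynomial of degree k−1 if and only if all entries of B are equal to a single nonzero integer β; in that case p_B(b) = C(b/β + k − 1, k − 1) for all b in the semigroup generated by β. -/
/-!
Fix `j` and apply to the counting function `N b = #{x | ∑ B i * x i = b}` the composite of the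
backward differences `f ↦ f - f (· - B i)` for `i ≠ j`. Splitting solutions according to whether
`x m = 0` gives `N_{J ∪ {m}} b - N_{J ∪ {m}} (b - B m) = N_J b`, where `N_J` counts solutions
supported on `J`; so the differences leave the number of solutions supported on `{j}`, which is `1`
at multiples of `B j`. Applied to a polynomial `P` of degree `k - 1` the same differences give the
constant `(k - 1)! * P.coeff (k - 1) * ∏_{i ≠ j} B i`. Comparing at a point all of whose shifts lie
in the semigroup, `∏_{i ≠ j} B i` does not depend on `j`, so all entries are equal. The kernel
condition says the entries are nonzero of one sign, which makes the counts finite and provides that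
point. Conversely, for `B = (β, …, β)` stars and bars gives `C(m + k - 1, k - 1)` at `b = β m`, a
polynomial in `b`.
-/

open Finset Polynomial
open scoped Nat

section IterDiff

variable {ι G R : Type*} [AddCommGroup G] [CommRing R]

def iterDiff (c : ι → G) (I : Finset ι) (f : G → R) (x : G) : R :=
  ∑ T ∈ I.powerset, (-1) ^ T.card * f (x - ∑ i ∈ T, c i)

variable (c : ι → G) (f : G → R)

@[simp]
lemma iterDiff_empty (x : G) : iterDiff c ∅ f x = f x := by
  simp [iterDiff]

lemma iterDiff_insert [DecidableEq ι] {I : Finset ι} {m : ι} (hm : m ∉ I) (x : G) :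
    iterDiff c (insert m I) f x = iterDiff c I (fun y ↦ f y - f (y - c m)) x := by
  rw [iterDiff, sum_powerset_insert hm, iterDiff, ← sum_add_distrib]
  refine sum_congr rfl fun T hT ↦ ?_
  have hmT : m ∉ T := fun h ↦ hm (mem_powerset.mp hT h)
  rw [card_insert_of_notMem hmT, sum_insert hmT, pow_succ, sub_add_eq_sub_sub_swap]
  ring

lemma iterDiff_congr {I : Finset ι} {g : G → R} {x : G}
    (h : ∀ T ⊆ I, f (x - ∑ i ∈ T, c i) = g (x - ∑ i ∈ T, c i)) :
    iterDiff c I f x = iterDiff c I g x :=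
  sum_congr rfl fun T hT ↦ by rw [h T (mem_powerset.mp hT)]

lemma iterDiff_comp_addMonoidHom {G' : Type*} [AddCommGroup G'] (e : G →+ G') (f : G' → R)
    (I : Finset ι) (x : G) :
    iterDiff (e ∘ c) I f (e x) = iterDiff c I (f ∘ e) x := by
  simp [iterDiff, map_sub, map_sum]

end IterDiff

section Taylor

variable {R : Type*} [CommRing R] {P : R[X]} {n : ℕ}

lemma coeff_taylor_of_natDegree_le_succ (hP : P.natDegree ≤ n + 1) (r : R) :
    (taylor r P).coeff n = P.coeff n + (n + 1) * P.coeff (n + 1) * r := by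
  have h : (hasseDeriv n P).natDegree ≤ 1 := (natDegree_hasseDeriv_le P n).trans (by omega)
  rw [taylor_coeff, eq_X_add_C_of_natDegree_le_one h]
  simp [hasseDeriv_coeff, add_comm 1 n]
  ring

lemma coeff_taylor_of_natDegree_le (hP : P.natDegree ≤ n) (r : R) :
    (taylor r P).coeff n = P.coeff n := by
  have h : (hasseDeriv n P).natDegree ≤ 0 := (natDegree_hasseDeriv_le P n).trans (by omega)
  rw [taylor_coeff, eq_C_of_natDegree_le_zero h]
  simp [hasseDeriv_coeff]

lemma natDegree_sub_taylor_le (hP : P.natDegree ≤ n + 1) (r : R) :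
    (P - taylor r P).natDegree ≤ n := by
  refine natDegree_le_iff_coeff_eq_zero.mpr fun m hm ↦ ?_
  obtain rfl | hm := (Nat.succ_le_of_lt hm).eq_or_lt
  · rw [coeff_sub, coeff_taylor_of_natDegree_le hP, sub_self]
  · have hPm : P.natDegree < m := by omega
    rw [coeff_sub, coeff_eq_zero_of_natDegree_lt hPm,
      coeff_eq_zero_of_natDegree_lt (by rwa [natDegree_taylor]), sub_self]

lemma iterDiff_eval_of_natDegree_le {ι : Type*} [DecidableEq ι] (c : ι → R) (I : Finset ι)
    (P : R[X]) (hP : P.natDegree ≤ I.card) (x : R) :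
    iterDiff c I P.eval x = I.card ! * P.coeff I.card * ∏ i ∈ I, c i := by
  induction I using Finset.induction_on generalizing P with
  | empty =>
    rw [card_empty] at hP
    nth_rw 1 [eq_C_of_natDegree_le_zero hP]
    simp
  | @insert m I hm ih =>
    rw [card_insert_of_notMem hm] at hP ⊢
    have hdiff : (fun y ↦ P.eval y - P.eval (y - c m)) = (P - taylor (-c m) P).eval := by
      ext y
      simp [taylor_eval, sub_eq_add_neg]
    rw [iterDiff_insert c _ hm, hdiff, ih _ (natDegree_sub_taylor_le hP _), coeff_sub,
      coeff_taylor_of_natDegree_le_succ hP, prod_insert hm, Nat.factorial_succ]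
    push_cast
    ring

end Taylor

section Counting

variable {ι : Type*} [Fintype ι] (B : ι → ℤ)

def solutionsOn (J : Finset ι) (b : ℤ) : Set (ι → ℕ) :=
  {x | (∀ i ∉ J, x i = 0) ∧ ∑ i, B i * (x i : ℤ) = b}

lemma ncard_solutionsOn_univ (b : ℤ) :
    (solutionsOn B univ b).ncard = Nat.card {x : ι → ℕ // ∑ i, B i * (x i : ℤ) = b} := by
  rw [← Nat.card_coe_set_eq]
  exact Nat.card_congr (Equiv.subtypeEquivRight fun x ↦ by simp [solutionsOn])

lemma exists_sum_mul_eq_sub_sum (y : ι → ℕ) {T : Finset ι} (hT : ∀ i ∈ T, 1 ≤ y i) :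
    ∃ x : ι → ℕ, ∑ i, B i * (x i : ℤ) = ∑ i, B i * (y i : ℤ) - ∑ i ∈ T, B i := by
  classical
  refine ⟨fun i ↦ y i - if i ∈ T then 1 else 0, ?_⟩
  have hterm : ∀ i, B i * ((y i - if i ∈ T then 1 else 0 : ℕ) : ℤ) =
      B i * (y i : ℤ) - if i ∈ T then B i else 0 := by
    intro i
    split_ifs with hi
    · rw [Nat.cast_sub (hT i hi)]; ring
    · simp
  simp_rw [hterm, sum_sub_distrib, sum_ite_mem, univ_inter]

variable {B}

lemma finite_solutionsOn {s : ℤ} (hs : ∀ i, 0 < s * B i) (J : Finset ι) (b : ℤ) :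
    (solutionsOn B J b).Finite := by
  refine (Set.Finite.pi fun _ ↦ Set.finite_Iic (s * b).toNat).subset fun x ⟨_, hx⟩ i _ ↦ ?_
  have hsum : ∑ j, s * B j * (x j : ℤ) = s * b := by
    simp_rw [← hx, mul_sum, mul_assoc]
  have hi : s * B i * (x i : ℤ) ≤ s * b :=
    hsum ▸ single_le_sum (f := fun j ↦ s * B j * (x j : ℤ))
      (fun j _ ↦ mul_nonneg (hs j).le (Nat.cast_nonneg _)) (mem_univ i)
  have := hs i
  show x i ≤ (s * b).toNat
  nlinarith [Int.self_le_toNat (s * b)]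

variable [DecidableEq ι]

lemma sum_mul_add_single (x : ι → ℕ) (m : ι) :
    ∑ i, B i * ((x + Pi.single m 1 : ι → ℕ) i : ℤ) = ∑ i, B i * (x i : ℤ) + B m := by
  simp [mul_add, sum_add_distrib, Pi.single_apply]

lemma solutionsOn_insert {J : Finset ι} {m : ι} (hm : m ∉ J) (b : ℤ) :
    solutionsOn B (insert m J) b =
      solutionsOn B J b ∪ (· + Pi.single m 1) '' solutionsOn B (insert m J) (b - B m) := by
  ext x
  constructor
  · rintro ⟨hsupp, hsum⟩
    by_cases hxm : x m = 0
    · refine .inl ⟨fun i hi ↦ ?_, hsum⟩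
      by_cases him : i = m
      · exact him ▸ hxm
      · exact hsupp i (by simp [him, hi])
    · have hx : x - Pi.single m 1 + Pi.single m 1 = x := by
        ext i
        by_cases him : i = m
        · subst him; simp; omega
        · simp [him]
      refine .inr ⟨x - Pi.single m 1, ⟨fun i hi ↦ ?_, ?_⟩, hx⟩
      · simp [hsupp i hi]
      · have := sum_mul_add_single (B := B) (x - Pi.single m 1) m
        rw [hx] at this
        linarith
  · rintro (⟨hsupp, hsum⟩ | ⟨y, ⟨hsupp, hsum⟩, rfl⟩)
    · exact ⟨fun i hi ↦ hsupp i (fun h ↦ hi (mem_insert_of_mem h)), hsum⟩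
    · refine ⟨fun i hi ↦ ?_, by rw [sum_mul_add_single, hsum, sub_add_cancel]⟩
      have him : i ≠ m := by rintro rfl; exact hi (mem_insert_self _ _)
      simp [hsupp i hi, him]

lemma ncard_solutionsOn_insert {s : ℤ} (hs : ∀ i, 0 < s * B i) {J : Finset ι} {m : ι}
    (hm : m ∉ J) (b : ℤ) :
    (solutionsOn B (insert m J) b).ncard =
      (solutionsOn B J b).ncard + (solutionsOn B (insert m J) (b - B m)).ncard := by
  have hdisj : Disjoint (solutionsOn B J b)
      ((· + Pi.single m 1) '' solutionsOn B (insert m J) (b - B m)) := by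
    refine Set.disjoint_left.mpr fun x ⟨hsupp, _⟩ ⟨y, _, hy⟩ ↦ ?_
    have := congrFun hy m
    simp [hsupp m hm] at this
  rw [solutionsOn_insert hm, Set.ncard_union_eq hdisj (finite_solutionsOn hs _ _)
    ((finite_solutionsOn hs _ _).image _), Set.ncard_image_of_injective _ (add_left_injective _)]

lemma ncard_solutionsOn_singleton {j : ι} (hj : B j ≠ 0) (n : ℕ) :
    (solutionsOn B {j} (B j * n)).ncard = 1 := by
  refine Set.ncard_eq_one.mpr ⟨Pi.single j n, Set.ext fun x ↦ ⟨fun ⟨hsupp, hsum⟩ ↦ ?_, ?_⟩⟩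
  · have hx : x = Pi.single j (x j) := by
      ext i
      by_cases hij : i = j
      · simp [hij]
      · simp [hij, hsupp i (by simpa using hij)]
    rw [hx] at hsum
    simp only [Pi.single_apply, Nat.cast_ite, Nat.cast_zero, mul_ite, mul_zero, sum_ite_eq',
      mem_univ, if_true] at hsum
    rw [Set.mem_singleton_iff, hx, Nat.cast_injective (mul_left_cancel₀ hj hsum)]
  · rintro rfl
    refine ⟨fun i hi ↦ by simp_all, ?_⟩
    simp [Pi.single_apply]

lemma iterDiff_ncard_solutionsOn {R : Type*} [CommRing R] {s : ℤ} (hs : ∀ i, 0 < s * B i)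
    {I J : Finset ι} (hIJ : Disjoint I J) (b : ℤ) :
    iterDiff B I (fun y ↦ ((solutionsOn B (J ∪ I) y).ncard : R)) b = (solutionsOn B J b).ncard := by
  induction I using Finset.induction_on with
  | empty => simp
  | @insert m I hm ih =>
    have hmJI : m ∉ J ∪ I := by
      simp [hm, disjoint_insert_left.mp hIJ |>.1]
    rw [iterDiff_insert _ _ hm, ← ih (disjoint_insert_left.mp hIJ).2]
    congr 1
    ext y
    rw [union_insert, ncard_solutionsOn_insert hs hmJI, Nat.cast_add, add_sub_cancel_right]

lemma factorial_mul_coeff_mul_prod_erase_eq_one {s : ℤ} (hs : ∀ i, 0 < s * B i) {P : ℚ[X]}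
    (hP : P.natDegree ≤ Fintype.card ι - 1)
    (heval : ∀ b : ℤ, (∃ x : ι → ℕ, ∑ i, B i * (x i : ℤ) = b) →
      (Nat.card {x : ι → ℕ // ∑ i, B i * (x i : ℤ) = b} : ℚ) = P.eval (b : ℚ)) (j : ι) :
    (Fintype.card ι - 1)! * P.coeff (Fintype.card ι - 1) * ∏ i ∈ univ.erase j, (B i : ℚ) = 1 := by
  set I := univ.erase j
  have hI : I.card = Fintype.card ι - 1 := card_erase_of_mem (mem_univ j)
  -- `b₀ = ∑_{i ≠ j} (s * B j) * B i` is a multiple of `B j` with all coefficients `≥ 1`, so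
  -- `b₀ - ∑_{i ∈ T} B i` stays in the semigroup for every `T ⊆ I`.
  set b₀ := B j * (s * ∑ i ∈ I, B i).toNat
  have hb₀ : b₀ = ∑ i, B i * ((if i ∈ I then (s * B j).toNat else 0 : ℕ) : ℤ) := by
    have hsum : 0 ≤ s * ∑ i ∈ I, B i := by
      rw [mul_sum]; exact sum_nonneg fun i _ ↦ (hs i).le
    simp only [Nat.cast_ite, Nat.cast_zero, mul_ite, mul_zero, sum_ite_mem, univ_inter,
      Int.toNat_of_nonneg (hs j).le, b₀]
    rw [Int.toNat_of_nonneg hsum, mul_sum, mul_sum]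
    exact sum_congr rfl fun i _ ↦ by ring
  have hpoints : ∀ T ⊆ I, ∃ x : ι → ℕ, ∑ i, B i * (x i : ℤ) = b₀ - ∑ i ∈ T, B i := fun T hT ↦
    hb₀ ▸ exists_sum_mul_eq_sub_sum B _ fun i hi ↦ by
      rw [if_pos (hT hi)]; have := hs j; omega
  calc (Fintype.card ι - 1)! * P.coeff (Fintype.card ι - 1) * ∏ i ∈ I, (B i : ℚ)
      = iterDiff (Int.castAddHom ℚ ∘ B) I P.eval (Int.castAddHom ℚ b₀) := by
        rw [iterDiff_eval_of_natDegree_le _ _ _ (hI ▸ hP), hI]; rfl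
    _ = iterDiff B I (fun y ↦ ((solutionsOn B univ y).ncard : ℚ)) b₀ := by
        rw [iterDiff_comp_addMonoidHom]
        exact iterDiff_congr _ _ fun T hT ↦ by rw [ncard_solutionsOn_univ, heval _ (hpoints T hT)]; rfl
    _ = 1 := by
        have hjI : Disjoint I {j} := disjoint_singleton_right.mpr (notMem_erase j univ)
        rw [← insert_erase (mem_univ j), ← singleton_union, iterDiff_ncard_solutionsOn hs hjI,
          ncard_solutionsOn_singleton (right_ne_zero_of_mul (hs j).ne'), Nat.cast_one]

end Counting

lemma exists_mul_pos_of_ker_nonneg_eq_zero {ι : Type*} [Fintype ι] {B : ι → ℤ}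
    (hker : ∀ x : ι → ℝ, (∀ i, 0 ≤ x i) → ∑ i, (B i : ℝ) * x i = 0 → x = 0) :
    ∃ s : ℤ, ∀ i, 0 < s * B i := by
  classical
  have hne : ∀ i, B i ≠ 0 := fun i hi ↦ by
    have := congrFun (hker (Pi.single i 1) (Pi.single_nonneg (α := fun _ ↦ ℝ) |>.mpr zero_le_one)
      (by simp [Pi.single_apply, hi])) i
    simp at this
  -- Otherwise `-B i' • eᵢ + B i • eᵢ'` is a nonzero nonnegative kernel vector.
  have hopp : ∀ i i', 0 < B i → B i' < 0 → False := fun i i' hi hi' ↦ by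
    have hiR : (0 : ℝ) < B i := by exact_mod_cast hi
    have hi'R : (B i' : ℝ) < 0 := by exact_mod_cast hi'
    have hii' : i ≠ i' := by rintro rfl; omega
    have := congrFun (hker (Pi.single i (-(B i' : ℝ)) + Pi.single i' (B i : ℝ))
      (add_nonneg (Pi.single_nonneg (α := fun _ ↦ ℝ) |>.mpr (neg_nonneg.mpr hi'R.le))
        (Pi.single_nonneg (α := fun _ ↦ ℝ) |>.mpr hiR.le))
      (by simp [Pi.single_apply, mul_add, sum_add_distrib]; ring)) i
    simp [hii'] at this
    exact hne i' (by exact_mod_cast this)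
  by_cases hpos : ∃ i, 0 < B i
  · obtain ⟨i, hi⟩ := hpos
    exact ⟨1, fun i' ↦ (one_mul (B i')).symm ▸
      (hne i').lt_or_gt.resolve_left fun h ↦ hopp i i' hi h⟩
  · refine ⟨-1, fun i ↦ ?_⟩
    have := hne i
    have := not_exists.mp hpos i
    omega

lemma eq_of_mul_prod_erase_eq_one {ι M : Type*} [Fintype ι] [DecidableEq ι] [CommMonoid M]
    {a : M} {f : ι → M}
    (h : ∀ j, a * ∏ i ∈ univ.erase j, f i = 1) (i j : ι) : f i = f j := by
  have key : ∀ i, f i = a * ∏ t, f t := fun i ↦ by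
    rw [← mul_prod_erase univ f (mem_univ i), mul_left_comm, h i, mul_one]
  rw [key i, key j]

lemma natCard_sum_eq_choose {ι : Type*} [Fintype ι] [Nonempty ι] (m : ℕ) :
    Nat.card {x : ι → ℕ // ∑ i, x i = m} =
      (m + (Fintype.card ι - 1)).choose (Fintype.card ι - 1) := by
  classical
  rw [← Nat.card_congr (Sym.equivNatSumOfFintype ι m), Nat.card_eq_fintype_card,
    Sym.card_sym_eq_choose, ← Nat.choose_symm_add]
  congr 1
  have := Fintype.card_pos (α := ι)
  omega

lemma exists_natDegree_eq_eval_mul_eq_choose {β : ℚ} (hβ : β ≠ 0) (d : ℕ) :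
    ∃ P : ℚ[X], P.natDegree = d ∧ ∀ m : ℕ, P.eval (β * m) = (m + d).choose d := by
  have hfac : (d ! : ℚ) ≠ 0 := by positivity
  refine ⟨C (d ! : ℚ)⁻¹ * (ascPochhammer ℚ d).comp (C β⁻¹ * X + C 1), ?_, fun m ↦ ?_⟩
  · rw [natDegree_C_mul (inv_ne_zero hfac), natDegree_comp, ascPochhammer_natDegree,
      natDegree_linear (inv_ne_zero hβ), mul_one]
  · have harg : β⁻¹ * (β * m) + 1 = ((m + 1 : ℕ) : ℚ) := by
      push_cast; field_simp
    simp only [eval_mul, eval_C, eval_comp, eval_add, eval_X, harg]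
    rw [← ascPochhammer_eval_cast, ascPochhammer_nat_eq_ascFactorial,
      Nat.ascFactorial_eq_factorial_mul_choose, Nat.cast_mul, inv_mul_cancel_left₀ hfac]

/-- The coin-exchange counting function `p_B` for a `1 × k` integer matrix `B`,
restricted to the semigroup generated by its entries, agrees with a polynomial of
degree `k - 1` iff all entries equal a single nonzero integer `β`; and in that case
`p_B (β m) = C(m + k - 1, k - 1)`. -/
theorem stmt1 (k : ℕ) (hk : 1 ≤ k) (B : Fin k → ℤ)
    (hker : ∀ x : Fin k → ℝ, (∀ i, 0 ≤ x i) → (∑ i, (B i : ℝ) * x i = 0) → x = 0) :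
    ((∃ P : Polynomial ℚ, P.natDegree = k - 1 ∧
        ∀ b : ℤ, (∃ x : Fin k → ℕ, ∑ i, B i * (x i : ℤ) = b) →
          ((Nat.card {x : Fin k → ℕ // ∑ i, B i * (x i : ℤ) = b} : ℚ) = P.eval (b : ℚ))) ↔
      ∃ β : ℤ, β ≠ 0 ∧ ∀ i, B i = β) ∧
    (∀ β : ℤ, β ≠ 0 → (∀ i, B i = β) → ∀ m : ℕ,
      Nat.card {x : Fin k → ℕ // ∑ i, B i * (x i : ℤ) = β * m} =
        (m + (k - 1)).choose (k - 1)) := by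
  obtain ⟨s, hs⟩ := exists_mul_pos_of_ker_nonneg_eq_zero hker
  have : Nonempty (Fin k) := ⟨⟨0, hk⟩⟩
  have hcount : ∀ β : ℤ, β ≠ 0 → (∀ i, B i = β) → ∀ m : ℕ,
      Nat.card {x : Fin k → ℕ // ∑ i, B i * (x i : ℤ) = β * m} =
        (m + (k - 1)).choose (k - 1) := fun β hβ hB m ↦ by
    simp_rw [hB, ← mul_sum, ← Nat.cast_sum, mul_right_inj' hβ, Nat.cast_inj]
    simpa using natCard_sum_eq_choose (ι := Fin k) m
  refine ⟨⟨fun ⟨P, hdeg, heval⟩ ↦ ?_, fun ⟨β, hβ, hB⟩ ↦ ?_⟩, hcount⟩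
  · have hprod := factorial_mul_coeff_mul_prod_erase_eq_one hs (P := P) (by simp [hdeg]) heval
    exact ⟨B ⟨0, hk⟩, right_ne_zero_of_mul (hs _).ne', fun i ↦ by
      exact_mod_cast eq_of_mul_prod_erase_eq_one hprod i _⟩
  · obtain ⟨P, hPdeg, hPeval⟩ :=
      exists_natDegree_eq_eval_mul_eq_choose (Int.cast_ne_zero.mpr hβ) (k - 1)
    refine ⟨P, hPdeg, ?_⟩
    rintro _ ⟨x, rfl⟩
    have hsum : ∑ i, B i * (x i : ℤ) = β * (∑ i, x i : ℕ) := by simp [hB, mul_sum]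
    rw [hsum, hcount β hβ hB, ← hPeval]
    push_cast
    simp
end

section
/- Let A be a d×n unimodular matrix of rank d (every d×d minor is in {−1, 0, 1}), let f be a facet of the cone pos_ℝ(A) with minimal inner facet normal ι ∈ ℤ^d (i.e., ι has coprime entries, ι·x ≥ 0 for all x ∈ pos_ℝ(A), and f = pos_ℝ(A) ∩ {x : ι·x = 0}). Then for every column c of A: ι·c = 0 if c ∈ f, and ι·c = 1 if c ∉ f. -/
/-!
Let `s = ι·c > 0` for a column `c` off the facet. Since the facet spans a hyperplane and a
point of the facet only involves columns lying on it, there are `d - 1` linearly independent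
columns on the facet; together with `c` they form a `d × d` submatrix `M` with nonzero
determinant, hence `det M = ±1`. Then `ιᵀ M = (s, 0, …, 0)`, and since `M⁻¹` is integral,
`ιᵀ = (s, 0, …, 0) M⁻¹` is divisible by `s`. As `ι` is primitive, `s = 1`.
-/

open Finset

/-- The cone of nonnegative real combinations of the vectors `v i` for `i` in `s`. -/
def posCone {d n : ℕ} (v : Fin n → (Fin d → ℝ)) (s : Set (Fin n)) : Set (Fin d → ℝ) :=
  {x | ∃ lam : Fin n → ℝ, (∀ i, 0 ≤ lam i) ∧ (∀ i ∉ s, lam i = 0) ∧ x = ∑ i, lam i • v i}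

open Matrix Module Submodule

theorem mem_posCone_univ {d n : ℕ} (v : Fin n → Fin d → ℝ) (i : Fin n) :
    v i ∈ posCone v Set.univ :=
  ⟨Pi.single i 1, fun k => by by_cases h : k = i <;> simp [h], fun k hk => (hk trivial).elim,
    by simp [Pi.single_apply, ite_smul]⟩

theorem span_posCone_inter_ker {d n : ℕ} (v : Fin n → Fin d → ℝ)
    (φ : (Fin d → ℝ) →ₗ[ℝ] ℝ) (hφ : ∀ i, 0 ≤ φ (v i)) :
    span ℝ (posCone v Set.univ ∩ {x | φ x = 0}) = span ℝ (v '' {i | φ (v i) = 0}) := by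
  refine le_antisymm (span_le.2 ?_) (span_mono ?_)
  · rintro _ ⟨⟨lam, hlam, -, rfl⟩, hx⟩
    have hterms : ∀ i, lam i * φ (v i) = 0 := by
      simp only [Set.mem_ofPred_eq, map_sum, map_smul, smul_eq_mul] at hx
      exact fun i => (sum_eq_zero_iff_of_nonneg fun i _ => mul_nonneg (hlam i) (hφ i)).1 hx i
        (mem_univ i)
    refine sum_mem fun i _ => ?_
    rcases mul_eq_zero.1 (hterms i) with h | h
    · simp [h]
    · exact smul_mem _ _ (subset_span ⟨i, h, rfl⟩)
  · rintro _ ⟨i, hi, rfl⟩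
    exact ⟨mem_posCone_univ v i, hi⟩

theorem exists_linearIndependent_cons_of_finrank_span {K V ι : Type*} [Field K] [AddCommGroup V]
    [Module K V] [FiniteDimensional K V] (v : ι → V) (φ : V →ₗ[K] K) {m : ℕ}
    (hm : finrank K (span K (v '' {i | φ (v i) = 0})) = m) {j : ι} (hj : φ (v j) ≠ 0) :
    ∃ g : Fin m → ι, (∀ k, φ (v (g k)) = 0) ∧ LinearIndependent K (v ∘ Fin.cons j g) := by
  subst hm
  obtain ⟨w, hw, -, hw_ind⟩ := exists_fun_fin_finrank_span_eq K (v '' {i | φ (v i) = 0})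
  choose g hg_ker hg using hw
  have hvg : v ∘ g = w := funext hg
  refine ⟨g, hg_ker, ?_⟩
  rw [Fin.comp_cons, hvg, linearIndependent_finCons]
  refine ⟨hw_ind, fun hmem => hj ?_⟩
  have hspan : span K (Set.range w) ≤ LinearMap.ker φ := by
    rw [span_le]
    rintro _ ⟨k, rfl⟩
    rw [← hg k]
    exact hg_ker k
  exact hspan hmem

theorem Matrix.det_ne_zero_of_linearIndependent_intCast_cols {K m : Type*} [Field K] [CharZero K]
    [Fintype m] [DecidableEq m] {M : Matrix m m ℤ}
    (h : LinearIndependent K fun k i => (M i k : K)) : M.det ≠ 0 := by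
  have hunit : IsUnit (M.map (Int.cast : ℤ → K)).det :=
    (isUnit_iff_isUnit_det _).1 (linearIndependent_cols_iff_isUnit.1 h)
  rw [← Int.cast_det] at hunit
  exact_mod_cast hunit.ne_zero

theorem Matrix.dvd_of_forall_dvd_vecMul {R m : Type*} [CommRing R] [Fintype m] [DecidableEq m]
    {M : Matrix m m R} (hM : IsUnit M.det) {v : m → R} {s : R} (h : ∀ k, s ∣ (v ᵥ* M) k)
    (r : m) : s ∣ v r := by
  have hv : v = (v ᵥ* M) ᵥ* M⁻¹ := by rw [vecMul_vecMul, mul_nonsing_inv M hM, vecMul_one]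
  rw [hv]
  exact dvd_sum fun k _ => (h k).mul_right _

theorem stmt6_general (d n : ℕ) (A : Matrix (Fin d) (Fin n) ℤ)
    (hunimod : ∀ g : Fin d → Fin n, Function.Injective g →
      (A.submatrix id g).det ∈ ({-1, 0, 1} : Set ℤ))
    (ι : Fin d → ℤ) (hgcd : Finset.univ.gcd ι = 1)
    (hinner : ∀ x ∈ posCone (fun c i => (A i c : ℝ)) Set.univ, 0 ≤ ∑ i, (ι i : ℝ) * x i)
    (f : Set (Fin d → ℝ))
    (hf : f = posCone (fun c i => (A i c : ℝ)) Set.univ ∩ {x | ∑ i, (ι i : ℝ) * x i = 0})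
    (hfacet : Module.finrank ℝ ↥(Submodule.span ℝ f) = d - 1)
    (j : Fin n) :
    ((fun i => (A i j : ℝ)) ∈ f → ∑ i, ι i * A i j = 0) ∧
    ((fun i => (A i j : ℝ)) ∉ f → ∑ i, ι i * A i j = 1) := by
  set v : Fin n → Fin d → ℝ := fun c i => (A i c : ℝ)
  set φ := dotProductBilin ℝ ℝ fun i => (ι i : ℝ)
  have hφv : ∀ c, φ (v c) = ((ι ᵥ* A) c : ℝ) := fun c => by simp [φ, v, vecMul, dotProduct]
  have hf' : f = posCone v Set.univ ∩ {x | φ x = 0} := hf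
  have hφ_nonneg : ∀ c, 0 ≤ φ (v c) := fun c => hinner _ (mem_posCone_univ v c)
  have hnonneg : ∀ c, 0 ≤ (ι ᵥ* A) c := fun c => by exact_mod_cast hφv c ▸ hφ_nonneg c
  have hmem : ∀ c, v c ∈ f ↔ (ι ᵥ* A) c = 0 := fun c => by
    simp [hf', mem_posCone_univ, hφv]
  refine ⟨(hmem j).1, fun hj => ?_⟩
  have hs : 0 < (ι ᵥ* A) j := (hnonneg j).lt_of_ne' ((hmem j).not.1 hj)
  obtain ⟨m, rfl⟩ : ∃ m, d = m + 1 :=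
    Nat.exists_eq_succ_of_ne_zero (by rintro rfl; simp [vecMul, dotProduct] at hs)
  rw [hf', span_posCone_inter_ker v φ hφ_nonneg, Nat.add_sub_cancel] at hfacet
  obtain ⟨g, hg_ker, hind⟩ := exists_linearIndependent_cons_of_finrank_span v φ hfacet
    (j := j) (by rw [hφv]; exact_mod_cast hs.ne')
  have hdet : IsUnit (A.submatrix id (Fin.cons j g)).det := by
    have hne := det_ne_zero_of_linearIndependent_intCast_cols hind
    rcases hunimod _ hind.injective.of_comp with h | h | h
    · exact h ▸ isUnit_one.neg
    · exact (hne h).elim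
    · exact h ▸ isUnit_one
  have hdvd : ∀ k, (ι ᵥ* A) j ∣ (ι ᵥ* A.submatrix id (Fin.cons j g)) k := by
    refine Fin.cases dvd_rfl fun k => ?_
    have : ((ι ᵥ* A) (g k) : ℝ) = 0 := hφv (g k) ▸ hg_ker k
    exact (Int.cast_eq_zero.1 this).symm ▸ dvd_zero _
  exact Int.eq_one_of_dvd_one hs.le
    (hgcd ▸ dvd_gcd fun r _ => dvd_of_forall_dvd_vecMul hdet hdvd r)

/-- For a unimodular matrix `A` and a facet `f` of `pos_ℝ(A)` with minimal inner facet
normal `ι`, every column `c` of `A` satisfies `ι·c = 0` if `c ∈ f` and `ι·c = 1`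
otherwise. -/
theorem stmt6 (d n : ℕ) (A : Matrix (Fin d) (Fin n) ℤ)
    (hrank : (A.map (Int.cast : ℤ → ℚ)).rank = d)
    (hunimod : ∀ g : Fin d → Fin n, Function.Injective g →
      (A.submatrix id g).det ∈ ({-1, 0, 1} : Set ℤ))
    (ι : Fin d → ℤ) (hgcd : Finset.univ.gcd ι = 1)
    (hinner : ∀ x ∈ posCone (fun c i => (A i c : ℝ)) Set.univ, 0 ≤ ∑ i, (ι i : ℝ) * x i)
    (f : Set (Fin d → ℝ))
    (hf : f = posCone (fun c i => (A i c : ℝ)) Set.univ ∩ {x | ∑ i, (ι i : ℝ) * x i = 0})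
    (hfacet : Module.finrank ℝ ↥(Submodule.span ℝ f) = d - 1)
    (j : Fin n) :
    ((fun i => (A i j : ℝ)) ∈ f → ∑ i, ι i * A i j = 0) ∧
    ((fun i => (A i j : ℝ)) ∉ f → ∑ i, ι i * A i j = 1) :=
  stmt6_general d n A hunimod ι hgcd hinner f hf hfacet j
end
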